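/- Let A be a unital C*-algebra, let α be a *-automorphism of A, let φ : A → ℂ be a positive tracial linear functional (φ(x* x) nonnegative real for all x, φ(x y) = φ(y x) for all x, y) which is α-invariant (φ(α(a)) = φ(a) for all a), and let h ∈ A be selfadjoint. Then for every a ∈ A, Re φ( (α(a))* · α(a) · exp(−h) ) ≤ K · Re φ( a* a · exp(−h) ), where K = ‖ exp(h/2) · α⁻¹(exp(−h)) · exp(h/2) ‖. (This is the estimate showing that the group action extends to bounded operators on the GNS space of the conformally deformed functional.) -/

import Mathlib

open NormedSpace
open scoped ComplexOrder

/-!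
With `e = exp (-h/2)` and `f = exp (h/2)` one has `e * f = f * e = 1` and `e * e = exp (-h)`.
By `α`-invariance, `φ(α(a)* α(a) exp(-h)) = φ(a* a b)` with `b = α⁻¹(exp(-h)) = e c e`, where
`c = f b f` is selfadjoint. The trace property turns `φ(a* a (e c e))` into `φ(y c y*)` with
`y = a e`, and `c ≤ ‖c‖` gives `y c y* ≤ ‖c‖ y y*`. A positive functional is monotone, and
`φ(y y*) = φ(a* a exp(-h))` by the trace property again.
-/

namespace NormedSpace

variable {𝔸 : Type*} [NormedRing 𝔸] [NormedAlgebra ℚ 𝔸] [CompleteSpace 𝔸]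

theorem exp_mul_exp_neg (x : 𝔸) : exp x * exp (-x) = 1 := by
  rw [← exp_add_of_commute (Commute.refl x).neg_right, add_neg_cancel, exp_zero]

theorem exp_neg_mul_exp (x : 𝔸) : exp (-x) * exp x = 1 := by
  simpa using exp_mul_exp_neg (-x)

end NormedSpace

theorem monotone_of_map_star_mul_self_nonneg {A B F : Type*} [NonUnitalSemiring A]
    [PartialOrder A] [StarRing A] [StarOrderedRing A] [AddCommMonoid B] [PartialOrder B]
    [IsOrderedAddMonoid B] [FunLike F A B] [AddMonoidHomClass F A B] (φ : F)
    (hpos : ∀ x : A, 0 ≤ φ (star x * x)) : Monotone φ := by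
  intro x y hxy
  obtain ⟨p, hp, rfl⟩ := (StarOrderedRing.le_iff x y).mp hxy
  rw [map_add]
  refine le_add_of_nonneg_right ?_
  clear hxy
  induction hp using AddSubmonoid.closure_induction with
  | mem _ hs => obtain ⟨s, rfl⟩ := hs; exact hpos s
  | zero => rw [map_zero]
  | add _ _ _ _ hp hq => rw [map_add]; exact add_nonneg hp hq

theorem map_star_mul_self_mul_conj_le {A : Type*} [CStarAlgebra A] [PartialOrder A]
    [StarOrderedRing A] (φ : A →ₗ[ℂ] ℂ) (hpos : ∀ x : A, 0 ≤ φ (star x * x))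
    (htrace : ∀ x y : A, φ (x * y) = φ (y * x)) {c e : A} (hc : IsSelfAdjoint c)
    (he : IsSelfAdjoint e) (a : A) :
    φ (star a * a * (e * c * e)) ≤ ‖c‖ * φ (star a * a * (e * e)) := by
  set y := a * e
  have hconj (d : A) : φ (star a * a * (e * d * e)) = φ (y * d * star y) := by
    rw [mul_assoc, htrace]
    simp only [y, star_mul, he.star_eq, mul_assoc]
  have hscalar : y * algebraMap ℝ A ‖c‖ * star y = (‖c‖ : ℂ) • (y * 1 * star y) := by
    rw [Algebra.algebraMap_eq_smul_one, mul_smul_comm, smul_mul_assoc, Complex.coe_smul]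
  calc φ (star a * a * (e * c * e)) = φ (y * c * star y) := hconj c
    _ ≤ φ (y * algebraMap ℝ A ‖c‖ * star y) :=
      monotone_of_map_star_mul_self_nonneg φ hpos
        (star_right_conjugate_le_conjugate hc.le_algebraMap_norm_self y)
    _ = ‖c‖ * φ (star a * a * (e * e)) := by
      rw [hscalar, map_smul, ← hconj, mul_one, smul_eq_mul]

/-- **Boundedness of the group action on the deformed GNS space.**
Let `α` be a `*`-automorphism of a unital C*-algebra `A`, let `φ` be a positive tracial
`α`-invariant linear functional on `A`, and let `h ∈ A` be selfadjoint.  Then for every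
`a ∈ A`,
`Re φ(α(a)* α(a) exp(−h)) ≤ ‖exp(h/2) α⁻¹(exp(−h)) exp(h/2)‖ · Re φ(a* a exp(−h))`. -/
theorem re_deformed_action_bound
    (A : Type*) [CStarAlgebra A]
    (α : A ≃⋆ₐ[ℂ] A)
    (φ : A →ₗ[ℂ] ℂ)
    (hpos : ∀ x : A, 0 ≤ φ (star x * x))
    (htrace : ∀ x y : A, φ (x * y) = φ (y * x))
    (hinv : ∀ a : A, φ (α a) = φ a)
    (h : A) (hsa : star h = h) (a : A) :
    (φ (star (α a) * α a * exp (-h))).re ≤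
      ‖exp ((2⁻¹ : ℂ) • h) * α.symm (exp (-h)) * exp ((2⁻¹ : ℂ) • h)‖ *
        (φ (star a * a * exp (-h))).re := by
  let := CStarAlgebra.spectralOrder A
  have := CStarAlgebra.spectralOrderedRing A
  let : NormedAlgebra ℚ A := NormedAlgebra.restrictScalars ℚ ℂ A
  have hh : IsSelfAdjoint h := hsa
  set x : A := (2⁻¹ : ℂ) • h
  set b : A := α.symm (exp (-h))
  have hx : IsSelfAdjoint x := IsSelfAdjoint.smul (by simp [IsSelfAdjoint]) hh
  have hb : IsSelfAdjoint b := hh.neg.exp.map α.symm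
  have hexp : exp (-h) = exp (-x) * exp (-x) := by
    rw [← exp_add_of_commute (Commute.refl _), ← neg_add, ← add_smul]
    norm_num
  have hb_conj : b = exp (-x) * (exp x * b * exp x) * exp (-x) := by
    simp only [← mul_assoc, exp_neg_mul_exp, one_mul]
    rw [mul_assoc, exp_mul_exp_neg, mul_one]
  have hlhs : φ (star (α a) * α a * exp (-h)) = φ (star a * a * b) := by
    rw [← hinv (star a * a * b), map_mul α, map_mul α, map_star, StarAlgEquiv.apply_symm_apply]
  have key := map_star_mul_self_mul_conj_le φ hpos htrace
    (hb.conjugate_self hx.exp) hx.neg.exp a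
  rw [← hb_conj, ← hexp, ← hlhs] at key
  simpa only [Complex.re_ofReal_mul] using (Complex.le_def.mp key).1
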